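/- arXiv:1807.05044 — 4 statements merged into one kernel-verified Lean document; each statement's English description precedes it below -/
import Mathlib

section
/- Let B₁ ∈ ℝ^{n₀×n₁}, V = [I;-I], B̂₁ = (B₁, -B₁), and Âₗ = (B̂₁⁻)^T B̂₁⁺ + (B̂₁⁺)^T B̂₁⁻. Then V^T Âₗ = -B₁^T B₁ V^T, i.e., Âₗ is a lifting of -B₁^T B₁. -/
open Matrix

/-- The lifting matrix `V = [I; -I]`. -/
noncomputable def liftV (n : ℕ) : Matrix (Fin n ⊕ Fin n) (Fin n) ℝ :=
  Matrix.of fun i j =>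
    match i with
    | Sum.inl a => if a = j then (1 : ℝ) else 0
    | Sum.inr a => if a = j then (-1 : ℝ) else 0

/-- Entrywise positive part. -/
def matPos {m k : Type*} (M : Matrix m k ℝ) : Matrix m k ℝ :=
  Matrix.of fun i j => max (M i j) 0

/-- Entrywise negative part. -/
def matNeg {m k : Type*} (M : Matrix m k ℝ) : Matrix m k ℝ :=
  Matrix.of fun i j => max (-M i j) 0

/-!
Writing `P, N` for the positive and negative parts of `B̂₁ = B₁Vᵀ = (B₁, -B₁)`, the columns of
`P` are `(B₁⁺, B₁⁻)` and those of `N` are `(B₁⁻, B₁⁺)`, so `PV = B₁` and `NV = -B₁`. Hence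
`Vᵀ(NᵀP + PᵀN) = (NV)ᵀP + (PV)ᵀN = -B₁ᵀ(P - N) = -B₁ᵀB̂₁ = -B₁ᵀB₁Vᵀ`.
-/

theorem matPos_sub_matNeg {m k : Type*} (M : Matrix m k ℝ) : matPos M - matNeg M = M := by
  ext i j
  exact max_zero_sub_max_neg_zero_eq_self (M i j)

section liftV

variable {m : Type*} {n : ℕ}

theorem mul_liftV_apply [Fintype m] (A : Matrix m (Fin n ⊕ Fin n) ℝ) (i : m) (j : Fin n) :
    (A * liftV n) i j = A i (Sum.inl j) - A i (Sum.inr j) := by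
  simp [mul_apply, Fintype.sum_sum_type, liftV, sub_eq_add_neg]

theorem mul_liftV_transpose_apply_inl (M : Matrix m (Fin n) ℝ) (i : m) (a : Fin n) :
    (M * (liftV n)ᵀ) i (Sum.inl a) = M i a := by
  simp [mul_apply, liftV]

theorem mul_liftV_transpose_apply_inr (M : Matrix m (Fin n) ℝ) (i : m) (a : Fin n) :
    (M * (liftV n)ᵀ) i (Sum.inr a) = -M i a := by
  simp [mul_apply, liftV]

theorem matPos_mul_liftV_transpose_mul_liftV [Fintype m] (M : Matrix m (Fin n) ℝ) :
    matPos (M * (liftV n)ᵀ) * liftV n = M := by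
  ext i j
  simp only [mul_liftV_apply, matPos, of_apply, mul_liftV_transpose_apply_inl,
    mul_liftV_transpose_apply_inr]
  exact max_zero_sub_max_neg_zero_eq_self (M i j)

theorem matNeg_mul_liftV_transpose_mul_liftV [Fintype m] (M : Matrix m (Fin n) ℝ) :
    matNeg (M * (liftV n)ᵀ) * liftV n = -M := by
  ext i j
  simp only [mul_liftV_apply, matNeg, of_apply, mul_liftV_transpose_apply_inl,
    mul_liftV_transpose_apply_inr, neg_neg]
  rw [← neg_sub]
  exact congrArg Neg.neg (max_zero_sub_max_neg_zero_eq_self (M i j))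

end liftV

/-- With `B̂₁ = B₁Vᵀ` and `Âₗ = (B̂₁⁻)ᵀB̂₁⁺ + (B̂₁⁺)ᵀB̂₁⁻`, the matrix `Âₗ` is a lifting
of `-B₁ᵀB₁`, i.e. `Vᵀ Âₗ = -B₁ᵀB₁ Vᵀ`. -/
theorem stmt_4 (n₀ n₁ : ℕ) (B₁ : Matrix (Fin n₀) (Fin n₁) ℝ) :
    (liftV n₁)ᵀ *
      ((matNeg (B₁ * (liftV n₁)ᵀ))ᵀ * matPos (B₁ * (liftV n₁)ᵀ) +
       (matPos (B₁ * (liftV n₁)ᵀ))ᵀ * matNeg (B₁ * (liftV n₁)ᵀ)) =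
    (-(B₁ᵀ * B₁)) * (liftV n₁)ᵀ := by
  set P := matPos (B₁ * (liftV n₁)ᵀ)
  set N := matNeg (B₁ * (liftV n₁)ᵀ)
  calc (liftV n₁)ᵀ * (Nᵀ * P + Pᵀ * N)
      = (N * liftV n₁)ᵀ * P + (P * liftV n₁)ᵀ * N := by
        simp only [Matrix.mul_add, transpose_mul, Matrix.mul_assoc]
    _ = -B₁ᵀ * (P - N) := by
        rw [matNeg_mul_liftV_transpose_mul_liftV, matPos_mul_liftV_transpose_mul_liftV,
          transpose_neg, Matrix.mul_sub, Matrix.neg_mul, Matrix.neg_mul]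
        abel
    _ = (-(B₁ᵀ * B₁)) * (liftV n₁)ᵀ := by
        rw [matPos_sub_matNeg, Matrix.neg_mul, Matrix.neg_mul, Matrix.mul_assoc]
end

section
/- Let B₁B₂ = 0 and let D₂ ∈ ℝ^{n₁×n₁} be a positive definite diagonal matrix, D₁ a positive definite diagonal matrix of size n₀, D₃ = (1/3)I. Define the normalized Hodge 1-Laplacian ℒ₁ = D₂B₁^TD₁^{-1}B₁ + B₂D₃B₂^TD₂^{-1}. Then ℝ^{n₁} = im(B₂) ⊕ im(D₂B₁^T) ⊕ ker(ℒ₁), where the direct sum is orthogonal with respect to the inner product ⟨x,y⟩ = x^TD₂^{-1}y. -/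
open Matrix

/-!
Weight `ℝ^{n₁}` by `W = D₂⁻¹`. Since `W D₂ = 1` and `B₁B₂ = 0`, the images of `B₂` and `D₂B₁ᵀ`
are `W`-orthogonal. Pairing `ℒ₁z` with `z` gives
`⟨z, ℒ₁z⟩_W = (B₁z)ᵀD₁⁻¹(B₁z) + (B₂ᵀWz)ᵀD₃(B₂ᵀWz)`, so `ℒ₁z = 0` forces `B₁z = 0` and
`B₂ᵀWz = 0`, which makes `ker ℒ₁` orthogonal to both images. As `im ℒ₁` lies in the sum of the
two images, it is orthogonal to `ker ℒ₁`, hence meets it trivially; rank–nullity then gives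
`im ℒ₁ ⊕ ker ℒ₁ = ℝ^{n₁}`.
-/

theorem LinearMap.range_sup_ker_eq_top_of_disjoint {K V : Type*} [DivisionRing K]
    [AddCommGroup V] [Module K V] [FiniteDimensional K V] (f : V →ₗ[K] V)
    (h : Disjoint (LinearMap.range f) (LinearMap.ker f)) :
    LinearMap.range f ⊔ LinearMap.ker f = ⊤ :=
  Submodule.eq_top_of_disjoint _ _ (f.finrank_range_add_finrank_ker).ge h

namespace Matrix

variable {m n p : Type*} [Fintype m] [Fintype n] [Fintype p]

theorem mulVec_dotProduct_eq_dotProduct_transpose_mulVec (A : Matrix m n ℝ) (u : n → ℝ)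
    (w : m → ℝ) : (A *ᵥ u) ⬝ᵥ w = u ⬝ᵥ (Aᵀ *ᵥ w) := by
  rw [mulVec_transpose, dotProduct_comm, dotProduct_mulVec, dotProduct_comm]

theorem PosDef.dotProduct_mulVec_self_nonneg {A : Matrix n n ℝ} (hA : A.PosDef) (x : n → ℝ) :
    0 ≤ x ⬝ᵥ (A *ᵥ x) := by
  simpa using hA.posSemidef.dotProduct_mulVec_nonneg x

theorem PosDef.eq_zero_of_dotProduct_mulVec_self_eq_zero {A : Matrix n n ℝ} (hA : A.PosDef)
    {x : n → ℝ} (hx : x ⬝ᵥ (A *ᵥ x) = 0) : x = 0 := by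
  by_contra hne
  simpa [hx] using hA.dotProduct_mulVec_pos hne

def WeightedOrthogonal (W : Matrix n n ℝ) (S T : Submodule ℝ (n → ℝ)) : Prop :=
  ∀ x ∈ S, ∀ y ∈ T, x ⬝ᵥ (W *ᵥ y) = 0

namespace WeightedOrthogonal

variable {W : Matrix n n ℝ} {S S' T K : Submodule ℝ (n → ℝ)}

theorem mono_left (h : WeightedOrthogonal W S K) (hS : S' ≤ S) : WeightedOrthogonal W S' K :=
  fun x hx => h x (hS hx)

theorem sup_left (hS : WeightedOrthogonal W S K) (hT : WeightedOrthogonal W T K) :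
    WeightedOrthogonal W (S ⊔ T) K := by
  intro x hx z hz
  obtain ⟨y, hy, y', hy', rfl⟩ := Submodule.mem_sup.mp hx
  rw [add_dotProduct, hS y hy z hz, hT y' hy' z hz, add_zero]

theorem disjoint (hW : W.PosDef) (h : WeightedOrthogonal W S T) : Disjoint S T :=
  Submodule.disjoint_def.mpr fun x hxS hxT =>
    hW.eq_zero_of_dotProduct_mulVec_self_eq_zero (h x hxS x hxT)

end WeightedOrthogonal

section WeightedLaplacian

variable (B₁ : Matrix m n ℝ) (B₂ : Matrix n p ℝ) {D W L : Matrix n n ℝ}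
  {E : Matrix m m ℝ} {F : Matrix p p ℝ}

theorem range_laplacian_le (hL : L = D * B₁ᵀ * E * B₁ + B₂ * F * B₂ᵀ * W) :
    LinearMap.range (mulVecLin L) ≤
      LinearMap.range (mulVecLin B₂) ⊔ LinearMap.range (mulVecLin (D * B₁ᵀ)) := by
  rintro - ⟨y, rfl⟩
  rw [mulVecLin_apply, hL, add_mulVec, add_comm]
  refine Submodule.add_mem_sup ⟨F *ᵥ (B₂ᵀ *ᵥ (W *ᵥ y)), ?_⟩ ⟨E *ᵥ (B₁ *ᵥ y), ?_⟩ <;>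
    simp only [mulVecLin_apply, mulVec_mulVec, Matrix.mul_assoc]

variable [DecidableEq n]

theorem dotProduct_weight_mulVec_laplacian_self (hW : Wᵀ = W) (hWD : W * D = 1)
    (hL : L = D * B₁ᵀ * E * B₁ + B₂ * F * B₂ᵀ * W) (z : n → ℝ) :
    z ⬝ᵥ (W *ᵥ (L *ᵥ z)) =
      (B₁ *ᵥ z) ⬝ᵥ (E *ᵥ (B₁ *ᵥ z)) + (B₂ᵀ *ᵥ (W *ᵥ z)) ⬝ᵥ (F *ᵥ (B₂ᵀ *ᵥ (W *ᵥ z))) := by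
  simp only [hL, add_mulVec, mulVec_add, dotProduct_add, ← mulVec_mulVec]
  congr 1
  · rw [mulVec_mulVec _ W D, hWD, one_mulVec, ← mulVec_dotProduct_eq_dotProduct_transpose_mulVec]
  · conv_lhs =>
      rw [dotProduct_mulVec, dotProduct_mulVec, ← mulVec_transpose, ← mulVec_transpose, hW]

theorem mulVec_eq_zero_of_laplacian_mulVec_eq_zero (hW : Wᵀ = W) (hWD : W * D = 1)
    (hE : E.PosDef) (hF : F.PosDef) (hL : L = D * B₁ᵀ * E * B₁ + B₂ * F * B₂ᵀ * W)
    {z : n → ℝ} (hz : L *ᵥ z = 0) : B₁ *ᵥ z = 0 ∧ B₂ᵀ *ᵥ (W *ᵥ z) = 0 := by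
  have h := dotProduct_weight_mulVec_laplacian_self B₁ B₂ hW hWD hL z
  rw [hz, mulVec_zero, dotProduct_zero, eq_comm, add_eq_zero_iff_of_nonneg
    (hE.dotProduct_mulVec_self_nonneg _) (hF.dotProduct_mulVec_self_nonneg _)] at h
  exact ⟨hE.eq_zero_of_dotProduct_mulVec_self_eq_zero h.1,
    hF.eq_zero_of_dotProduct_mulVec_self_eq_zero h.2⟩

theorem weightedOrthogonal_range_range (hB : B₁ * B₂ = 0) (hWD : W * D = 1) :
    WeightedOrthogonal W (LinearMap.range (mulVecLin B₂))
      (LinearMap.range (mulVecLin (D * B₁ᵀ))) := by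
  rintro - ⟨u, rfl⟩ - ⟨v, rfl⟩
  rw [mulVecLin_apply, mulVecLin_apply, mulVec_mulVec, ← Matrix.mul_assoc, hWD, Matrix.one_mul,
    mulVec_dotProduct_eq_dotProduct_transpose_mulVec, mulVec_mulVec, ← transpose_mul, hB,
    transpose_zero, zero_mulVec, dotProduct_zero]

theorem weightedOrthogonal_range_ker_laplacian (hW : Wᵀ = W) (hWD : W * D = 1)
    (hE : E.PosDef) (hF : F.PosDef) (hL : L = D * B₁ᵀ * E * B₁ + B₂ * F * B₂ᵀ * W) :
    WeightedOrthogonal W (LinearMap.range (mulVecLin B₂)) (LinearMap.ker (mulVecLin L)) := by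
  rintro - ⟨u, rfl⟩ z hz
  rw [mulVecLin_apply, mulVec_dotProduct_eq_dotProduct_transpose_mulVec,
    (mulVec_eq_zero_of_laplacian_mulVec_eq_zero B₁ B₂ hW hWD hE hF hL hz).2, dotProduct_zero]

theorem weightedOrthogonal_range_mul_transpose_ker_laplacian (hW : Wᵀ = W) (hWD : W * D = 1)
    (hE : E.PosDef) (hF : F.PosDef) (hL : L = D * B₁ᵀ * E * B₁ + B₂ * F * B₂ᵀ * W) :
    WeightedOrthogonal W (LinearMap.range (mulVecLin (D * B₁ᵀ)))
      (LinearMap.ker (mulVecLin L)) := by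
  rintro - ⟨v, rfl⟩ z hz
  have hDW : Dᵀ * W = 1 := by rw [← hW, ← transpose_mul, hWD, transpose_one]
  rw [mulVecLin_apply, mulVec_dotProduct_eq_dotProduct_transpose_mulVec, transpose_mul,
    transpose_transpose, ← mulVec_mulVec, mulVec_mulVec _ Dᵀ, hDW, one_mulVec,
    (mulVec_eq_zero_of_laplacian_mulVec_eq_zero B₁ B₂ hW hWD hE hF hL hz).1, dotProduct_zero]

theorem range_sup_range_sup_ker_laplacian_eq_top (hW : W.PosDef) (hWD : W * D = 1)
    (hE : E.PosDef) (hF : F.PosDef) (hL : L = D * B₁ᵀ * E * B₁ + B₂ * F * B₂ᵀ * W) :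
    LinearMap.range (mulVecLin B₂) ⊔ LinearMap.range (mulVecLin (D * B₁ᵀ)) ⊔
      LinearMap.ker (mulVecLin L) = ⊤ := by
  have hWt : Wᵀ = W := by simpa using hW.isHermitian.eq
  have hdisj : Disjoint (LinearMap.range (mulVecLin L)) (LinearMap.ker (mulVecLin L)) :=
    ((weightedOrthogonal_range_ker_laplacian B₁ B₂ hWt hWD hE hF hL).sup_left
      (weightedOrthogonal_range_mul_transpose_ker_laplacian B₁ B₂ hWt hWD hE hF hL)).mono_left
      (range_laplacian_le B₁ B₂ hL) |>.disjoint hW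
  exact top_le_iff.mp <| (LinearMap.range_sup_ker_eq_top_of_disjoint _ hdisj).ge.trans
    (sup_le_sup_right (range_laplacian_le B₁ B₂ hL) _)

end WeightedLaplacian

end Matrix

/-- Normalized Hodge decomposition: with `B₁B₂ = 0`, positive definite diagonal
`D₁, D₂`, `D₃ = (1/3)I`, and `ℒ₁ = D₂B₁ᵀD₁⁻¹B₁ + B₂D₃B₂ᵀD₂⁻¹`, the space
`ℝ^{n₁}` decomposes as `im(B₂) ⊕ im(D₂B₁ᵀ) ⊕ ker(ℒ₁)`, orthogonally with
respect to the inner product `⟨x,y⟩ = xᵀD₂⁻¹y`. -/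
theorem stmt_11 (n₀ n₁ n₂ : ℕ)
    (B₁ : Matrix (Fin n₀) (Fin n₁) ℝ) (B₂ : Matrix (Fin n₁) (Fin n₂) ℝ)
    (hB : B₁ * B₂ = 0)
    (d₁ : Fin n₀ → ℝ) (d₂ : Fin n₁ → ℝ)
    (hd₁ : ∀ i, 0 < d₁ i) (hd₂ : ∀ i, 0 < d₂ i)
    (L : Matrix (Fin n₁) (Fin n₁) ℝ)
    (hL : L = Matrix.diagonal d₂ * B₁ᵀ * (Matrix.diagonal fun i => (d₁ i)⁻¹) * B₁ +
              B₂ * (((1 : ℝ)/3) • (1 : Matrix (Fin n₂) (Fin n₂) ℝ)) * B₂ᵀ * (Matrix.diagonal fun i => (d₂ i)⁻¹)) :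
    (∀ x ∈ LinearMap.range (Matrix.mulVecLin B₂),
      ∀ y ∈ LinearMap.range (Matrix.mulVecLin (Matrix.diagonal d₂ * B₁ᵀ)),
        x ⬝ᵥ ((Matrix.diagonal fun i => (d₂ i)⁻¹) *ᵥ y) = 0) ∧
    (∀ x ∈ LinearMap.range (Matrix.mulVecLin B₂),
      ∀ z ∈ LinearMap.ker (Matrix.mulVecLin L),
        x ⬝ᵥ ((Matrix.diagonal fun i => (d₂ i)⁻¹) *ᵥ z) = 0) ∧
    (∀ y ∈ LinearMap.range (Matrix.mulVecLin (Matrix.diagonal d₂ * B₁ᵀ)),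
      ∀ z ∈ LinearMap.ker (Matrix.mulVecLin L),
        y ⬝ᵥ ((Matrix.diagonal fun i => (d₂ i)⁻¹) *ᵥ z) = 0) ∧
    LinearMap.range (Matrix.mulVecLin B₂) ⊔
      LinearMap.range (Matrix.mulVecLin (Matrix.diagonal d₂ * B₁ᵀ)) ⊔
      LinearMap.ker (Matrix.mulVecLin L) = ⊤ := by
  have hW : (diagonal fun i => (d₂ i)⁻¹).PosDef :=
    posDef_diagonal_iff.mpr fun i => inv_pos.mpr (hd₂ i)
  have hWD : (diagonal fun i => (d₂ i)⁻¹) * diagonal d₂ = 1 := by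
    simp [diagonal_mul_diagonal, (hd₂ _).ne']
  have hE : (diagonal fun i => (d₁ i)⁻¹).PosDef :=
    posDef_diagonal_iff.mpr fun i => inv_pos.mpr (hd₁ i)
  have hF : (((1 : ℝ) / 3) • (1 : Matrix (Fin n₂) (Fin n₂) ℝ)).PosDef :=
    PosDef.one.smul (by norm_num)
  have hWt : (diagonal fun i => (d₂ i)⁻¹)ᵀ = diagonal fun i => (d₂ i)⁻¹ := diagonal_transpose _
  exact ⟨weightedOrthogonal_range_range B₁ B₂ hB hWD,
    weightedOrthogonal_range_ker_laplacian B₁ B₂ hWt hWD hE hF hL,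
    weightedOrthogonal_range_mul_transpose_ker_laplacian B₁ B₂ hWt hWD hE hF hL,
    range_sup_range_sup_ker_laplacian_eq_top B₁ B₂ hW hWD hE hF hL⟩
end

section
/- With ℒ₁ = D₂B₁^TD₁^{-1}B₁ + B₂D₃B₂^TD₂^{-1} and ℒ₁ˢ = D₂^{-1/2}ℒ₁D₂^{1/2}, the matrix ℒ₁ˢ = D₂^{1/2}B₁^TD₁^{-1}B₁D₂^{1/2} + D₂^{-1/2}B₂D₃B₂^TD₂^{-1/2} is symmetric positive semidefinite, and hence all eigenvalues of ℒ₁ are real and nonnegative. -/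
/-!
Conjugating by `D₂^{1/2}` turns `ℒ₁` into `D₂^{1/2}B₁ᵀD₁⁻¹B₁D₂^{1/2} + D₂^{-1/2}B₂D₃B₂ᵀD₂^{-1/2}`,
a sum of two Gram-type matrices `Cᵀ D C` with `D` a nonnegative diagonal, hence positive
semidefinite. Being similar to `ℒ₁ˢ`, the (complexified) matrix `ℒ₁` has the same eigenvalues,
and the Rayleigh quotient `v* ℒ₁ˢ v / v* v` of an eigenvector is a nonnegative real number.
-/

open Matrix
open scoped ComplexOrder

namespace Matrix

variable {m n k : Type*} [Fintype m] [Fintype n] [Fintype k]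

section Diagonal

variable [DecidableEq n]

theorem diagonal_inv_sqrt_mul_diagonal (d : n → ℝ) :
    diagonal (fun i => (√(d i))⁻¹) * diagonal d = diagonal fun i => √(d i) := by
  rw [diagonal_mul_diagonal]
  congr 1 with i
  rw [← div_eq_inv_mul, Real.div_sqrt]

theorem diagonal_inv_mul_diagonal_sqrt (d : n → ℝ) :
    diagonal (fun i => (d i)⁻¹) * diagonal (fun i => √(d i)) =
      diagonal fun i => (√(d i))⁻¹ := by
  rw [diagonal_mul_diagonal]
  congr 1 with i
  rw [← div_eq_inv_mul, Real.sqrt_div_self]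

theorem diagonal_sqrt_mul_diagonal_inv_sqrt {d : n → ℝ} (hd : ∀ i, 0 < d i) :
    diagonal (fun i => √(d i)) * diagonal (fun i => (√(d i))⁻¹) = 1 := by
  rw [diagonal_mul_diagonal, ← diagonal_one]
  congr 1 with i
  exact mul_inv_cancel₀ (Real.sqrt_pos.mpr (hd i)).ne'

theorem diagonal_inv_sqrt_mul_add_mul_diagonal_sqrt (d : n → ℝ) (B₁ : Matrix m n ℝ)
    (D₁ : Matrix m m ℝ) (B₂ : Matrix n k ℝ) (D₃ : Matrix k k ℝ) :
    diagonal (fun i => (√(d i))⁻¹) *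
        (diagonal d * B₁ᵀ * D₁ * B₁ + B₂ * D₃ * B₂ᵀ * diagonal (fun i => (d i)⁻¹)) *
        diagonal (fun i => √(d i)) =
      diagonal (fun i => √(d i)) * B₁ᵀ * D₁ * B₁ * diagonal (fun i => √(d i)) +
        diagonal (fun i => (√(d i))⁻¹) * B₂ * D₃ * B₂ᵀ * diagonal (fun i => (√(d i))⁻¹) := by
  simp only [Matrix.mul_add, Matrix.add_mul, Matrix.mul_assoc, diagonal_inv_mul_diagonal_sqrt]
  rw [← Matrix.mul_assoc _ (diagonal d), diagonal_inv_sqrt_mul_diagonal]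

theorem posSemidef_diagonal_mul_transpose_add_diagonal_mul {D₁ : Matrix m m ℝ}
    {D₃ : Matrix k k ℝ} (hD₁ : D₁.PosSemidef) (hD₃ : D₃.PosSemidef) (s t : n → ℝ)
    (B₁ : Matrix m n ℝ) (B₂ : Matrix n k ℝ) :
    (diagonal s * B₁ᵀ * D₁ * B₁ * diagonal s +
      diagonal t * B₂ * D₃ * B₂ᵀ * diagonal t).PosSemidef := by
  refine .add ?_ ?_
  · simpa only [conjTranspose_eq_transpose_of_trivial, transpose_mul, diagonal_transpose,
      Matrix.mul_assoc] using hD₁.conjTranspose_mul_mul_same (B₁ * diagonal s)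
  · simpa only [conjTranspose_eq_transpose_of_trivial, transpose_mul, diagonal_transpose,
      Matrix.mul_assoc] using hD₃.mul_mul_conjTranspose_same (diagonal t * B₂)

end Diagonal

variable {𝕜 : Type*} [RCLike 𝕜]

theorem PosSemidef.map_ofReal [DecidableEq n] {M : Matrix n n ℝ} (hM : M.PosSemidef) :
    (M.map ((↑) : ℝ → 𝕜)).PosSemidef := by
  open scoped MatrixOrder in
  obtain ⟨B, rfl⟩ := CStarAlgebra.nonneg_iff_eq_star_mul_self.mp hM.nonneg
  have : (star B * B).map ((↑) : ℝ → 𝕜) = (B.map (↑))ᴴ * B.map (↑) := by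
    ext i j
    simp [mul_apply, conjTranspose_apply, star_eq_conjTranspose]
  rw [this]
  exact posSemidef_conjTranspose_mul_self _

theorem PosSemidef.nonneg_of_mulVec_eq_smul {A : Matrix n n 𝕜} (hA : A.PosSemidef) {μ : 𝕜}
    {v : n → 𝕜} (hv : v ≠ 0) (hAv : A *ᵥ v = μ • v) : 0 ≤ μ := by
  have hquad : 0 ≤ μ * (star v ⬝ᵥ v) := by
    simpa only [hAv, dotProduct_smul, smul_eq_mul] using hA.dotProduct_mulVec_nonneg v
  have hnorm : 0 < star v ⬝ᵥ v := dotProduct_star_self_pos_iff.mpr hv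
  simpa [hnorm.ne'] using mul_nonneg hquad (inv_nonneg.mpr hnorm.le)

theorem mulVec_mul_mul_mulVec {R : Type*} [CommRing R] [DecidableEq n] {A P Q : Matrix n n R}
    (hPQ : P * Q = 1)
    {μ : R} {v : n → R} (hAv : A *ᵥ v = μ • v) : (Q * A * P) *ᵥ (Q *ᵥ v) = μ • (Q *ᵥ v) := by
  rw [mulVec_mulVec, Matrix.mul_assoc, Matrix.mul_assoc, hPQ, Matrix.mul_one, ← mulVec_mulVec,
    hAv, mulVec_smul]

theorem mulVec_ne_zero_of_mul_eq_one {R : Type*} [CommRing R] [DecidableEq n]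
    {P Q : Matrix n n R} (hPQ : P * Q = 1) {v : n → R} (hv : v ≠ 0) : Q *ᵥ v ≠ 0 := by
  intro h
  apply hv
  rw [← one_mulVec v, ← hPQ, ← mulVec_mulVec, h, mulVec_zero]

theorem nonneg_of_mulVec_eq_smul_of_posSemidef_conj [DecidableEq n] {A P Q : Matrix n n ℝ}
    (hPQ : P * Q = 1) (hS : (Q * A * P).PosSemidef) {μ : 𝕜} {v : n → 𝕜} (hv : v ≠ 0)
    (hAv : A.map (↑) *ᵥ v = μ • v) : 0 ≤ μ := by
  have hPQ𝕜 : P.map ((↑) : ℝ → 𝕜) * Q.map (↑) = 1 := by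
    rw [← Matrix.map_mul (f := algebraMap ℝ 𝕜), hPQ, Matrix.map_one _ (map_zero _) (map_one _)]
  have hS𝕜 : (Q * A * P).map ((↑) : ℝ → 𝕜) = Q.map (↑) * A.map (↑) * P.map (↑) := by
    simp only [Matrix.map_mul (f := algebraMap ℝ 𝕜)]
  refine hS.map_ofReal.nonneg_of_mulVec_eq_smul (mulVec_ne_zero_of_mul_eq_one hPQ𝕜 hv) ?_
  rw [hS𝕜]
  exact mulVec_mul_mul_mulVec hPQ𝕜 hAv

end Matrix

/-- With `ℒ₁ = D₂B₁ᵀD₁⁻¹B₁ + B₂D₃B₂ᵀD₂⁻¹` and `ℒ₁ˢ = D₂^{-1/2}ℒ₁D₂^{1/2}`,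
the matrix `ℒ₁ˢ` equals `D₂^{1/2}B₁ᵀD₁⁻¹B₁D₂^{1/2} + D₂^{-1/2}B₂D₃B₂ᵀD₂^{-1/2}`,
is symmetric positive semidefinite, and hence all eigenvalues of `ℒ₁` (over ℂ)
are real and nonnegative. -/
theorem stmt_12 (n₀ n₁ n₂ : ℕ)
    (B₁ : Matrix (Fin n₀) (Fin n₁) ℝ) (B₂ : Matrix (Fin n₁) (Fin n₂) ℝ)
    (d₁ : Fin n₀ → ℝ) (d₂ : Fin n₁ → ℝ)
    (hd₁ : ∀ i, 0 < d₁ i) (hd₂ : ∀ i, 0 < d₂ i)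
    (L Ls : Matrix (Fin n₁) (Fin n₁) ℝ)
    (hL : L = Matrix.diagonal d₂ * B₁ᵀ * (Matrix.diagonal fun i => (d₁ i)⁻¹) * B₁ +
              B₂ * (((1 : ℝ)/3) • (1 : Matrix (Fin n₂) (Fin n₂) ℝ)) * B₂ᵀ *
                (Matrix.diagonal fun i => (d₂ i)⁻¹))
    (hLs : Ls = (Matrix.diagonal fun i => (Real.sqrt (d₂ i))⁻¹) * L *
                (Matrix.diagonal fun i => Real.sqrt (d₂ i))) :
    Ls = (Matrix.diagonal fun i => Real.sqrt (d₂ i)) * B₁ᵀ *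
           (Matrix.diagonal fun i => (d₁ i)⁻¹) * B₁ *
           (Matrix.diagonal fun i => Real.sqrt (d₂ i)) +
         (Matrix.diagonal fun i => (Real.sqrt (d₂ i))⁻¹) * B₂ *
           (((1 : ℝ)/3) • (1 : Matrix (Fin n₂) (Fin n₂) ℝ)) * B₂ᵀ *
           (Matrix.diagonal fun i => (Real.sqrt (d₂ i))⁻¹) ∧
    Ls.IsSymm ∧ Ls.PosSemidef ∧
    (∀ (μ : ℂ) (v : Fin n₁ → ℂ), v ≠ 0 →
      (L.map (fun x : ℝ => (x : ℂ))) *ᵥ v = μ • v → μ.im = 0 ∧ 0 ≤ μ.re) := by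
  have hLs_eq : Ls = _ := hLs ▸ hL ▸ diagonal_inv_sqrt_mul_add_mul_diagonal_sqrt d₂ B₁ _ B₂ _
  have hD₁ : (diagonal fun i => (d₁ i)⁻¹).PosSemidef :=
    posSemidef_diagonal_iff.mpr fun i => inv_nonneg.mpr (hd₁ i).le
  have hD₃ : (((1 : ℝ) / 3) • (1 : Matrix (Fin n₂) (Fin n₂) ℝ)).PosSemidef :=
    PosSemidef.one.smul (by norm_num)
  have hpsd : Ls.PosSemidef :=
    hLs_eq ▸ posSemidef_diagonal_mul_transpose_add_diagonal_mul hD₁ hD₃ _ _ B₁ B₂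
  refine ⟨hLs_eq, isHermitian_iff_isSymm.mp hpsd.isHermitian, hpsd, fun μ v hv hLv => ?_⟩
  have hμ : 0 ≤ μ := nonneg_of_mulVec_eq_smul_of_posSemidef_conj
    (diagonal_sqrt_mul_diagonal_inv_sqrt hd₂) (hLs ▸ hpsd) hv hLv
  exact ⟨(Complex.nonneg_iff.mp hμ).2.symm, (Complex.nonneg_iff.mp hμ).1⟩
end

section
/- Suppose -½ℒ₁ V^T = V^T P̂ for a column-stochastic matrix P̂ ∈ ℝ^{2n₁×2n₁}. Then for any 0 < α < 1 and any μ ∈ ℝ^{2n₁}, the lifted PageRank solution π̂ of (I - αP̂)π̂ = (1-α)μ satisfies (I + (α/2)ℒ₁) V^T π̂ = (1-α) V^T μ; equivalently V^T π̂ = (β-2)(βI + ℒ₁)^{-1} V^T μ with β = 2/α. -/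
/-!
The lifting relation gives the intertwining identity `(1 + (α/2) • L) * Vᵀ = Vᵀ * (1 - α • P)`,
which carries the lifted PageRank equation down to the first claim. For the resolvent form,
`1 - α • P` is invertible by column diagonal dominance, and `Vᵀ` has the right inverse
`E = [I; 0]`, so `(1 + (α/2) • L) * (Vᵀ * (1 - α • P)⁻¹ * E) = Vᵀ * E = 1`.
-/

open Matrix

theorem liftV_eq_fromRows (n : ℕ) : liftV n = fromRows 1 (-1) := by
  ext (i | i) j <;> simp [liftV, one_apply, apply_ite]

theorem liftV_transpose_mul_fromRows_one_zero (n : ℕ) :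
    (liftV n)ᵀ * fromRows (1 : Matrix (Fin n) (Fin n) ℝ) (0 : Matrix (Fin n) (Fin n) ℝ) = 1 := by
  simp [liftV_eq_fromRows, transpose_fromRows, fromCols_mul_fromRows]

theorem isUnit_det_one_sub_smul_of_mem_colStochastic {ι : Type*} [Fintype ι] [DecidableEq ι]
    {P : Matrix ι ι ℝ} (hP : P ∈ colStochastic ℝ ι) {α : ℝ} (hα0 : 0 ≤ α) (hα1 : α < 1) :
    IsUnit (1 - α • P).det := by
  refine isUnit_iff_ne_zero.2 (det_ne_zero_of_sum_col_lt_diag fun k => ?_)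
  have hPkk : α * P k k ≤ α := mul_le_of_le_one_right hα0 <|
    (Finset.single_le_sum (f := fun i => P i k) (fun i _ => nonneg_of_mem_colStochastic hP)
      (Finset.mem_univ k)).trans_eq (sum_col_of_mem_colStochastic hP k)
  have hoff : ∑ i ∈ Finset.univ.erase k, ‖(1 - α • P) i k‖ = α * (1 - P k k) := by
    rw [← sum_col_of_mem_colStochastic hP k, ← Finset.add_sum_erase _ _ (Finset.mem_univ k),
      add_sub_cancel_left, Finset.mul_sum]
    refine Finset.sum_congr rfl fun i hi => ?_
    rw [Matrix.sub_apply, one_apply_ne (Finset.ne_of_mem_erase hi), Matrix.smul_apply,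
      smul_eq_mul, zero_sub, norm_neg, Real.norm_eq_abs,
      abs_of_nonneg (mul_nonneg hα0 (nonneg_of_mem_colStochastic hP))]
  rw [hoff, Matrix.sub_apply, one_apply_eq, Matrix.smul_apply, smul_eq_mul, Real.norm_eq_abs,
    abs_of_nonneg (by linarith)]
  linarith

theorem isUnit_det_of_mul_eq_mul_of_isUnit_det {R m n : Type*} [CommRing R]
    [Fintype m] [DecidableEq m] [Fintype n] [DecidableEq n] {M : Matrix m m R}
    {A : Matrix n n R} {W : Matrix m n R} {E : Matrix n m R} (h : M * W = W * A) (hA : IsUnit A.det)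
    (hWE : W * E = 1) :
    IsUnit M.det := by
  refine isUnit_det_of_right_inverse (B := W * A⁻¹ * E) ?_
  rw [← Matrix.mul_assoc, ← Matrix.mul_assoc, h, Matrix.mul_assoc W, mul_nonsing_inv A hA,
    Matrix.mul_one, hWE]

theorem one_add_smul_mul_eq_mul_one_sub_smul {K m n : Type*} [Field K]
    [Fintype m] [DecidableEq m] [Fintype n] [DecidableEq n] {L : Matrix m m K}
    {W : Matrix m n K} {P : Matrix n n K} (h : -((1 / 2 : K) • L) * W = W * P) (α : K) :
    (1 + (α / 2) • L) * W = W * (1 - α • P) := by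
  rw [Matrix.add_mul, Matrix.mul_sub, Matrix.one_mul, Matrix.mul_one, Matrix.mul_smul, ← h,
    Matrix.smul_mul, Matrix.neg_mul, Matrix.smul_mul, smul_neg, smul_smul, sub_eq_add_neg,
    neg_neg, mul_one_div]

/-- If `-½ℒ₁Vᵀ = VᵀP̂` for a column-stochastic `P̂`, and `π̂` solves the lifted
PageRank equation `(I - αP̂)π̂ = (1-α)μ` for `0 < α < 1`, then
`(I + (α/2)ℒ₁) Vᵀπ̂ = (1-α) Vᵀμ`; equivalently, with `β = 2/α`,
`Vᵀπ̂ = (β-2)(βI + ℒ₁)⁻¹ Vᵀμ`. -/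
theorem stmt_15 (n₁ : ℕ) (L : Matrix (Fin n₁) (Fin n₁) ℝ)
    (P : Matrix (Fin n₁ ⊕ Fin n₁) (Fin n₁ ⊕ Fin n₁) ℝ)
    (hPnonneg : ∀ i j, 0 ≤ P i j)
    (hPstoch : ∀ j, ∑ i, P i j = 1)
    (hlift : (-(((1 : ℝ)/2) • L)) * (liftV n₁)ᵀ = (liftV n₁)ᵀ * P)
    (α : ℝ) (hα0 : 0 < α) (hα1 : α < 1)
    (μ : (Fin n₁ ⊕ Fin n₁) → ℝ) (πhat : (Fin n₁ ⊕ Fin n₁) → ℝ)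
    (hπ : (1 - α • P) *ᵥ πhat = (1 - α) • μ) :
    (1 + (α/2) • L) *ᵥ ((liftV n₁)ᵀ *ᵥ πhat) = (1 - α) • ((liftV n₁)ᵀ *ᵥ μ) ∧
    (liftV n₁)ᵀ *ᵥ πhat =
      (2/α - 2) • (((2/α) • (1 : Matrix (Fin n₁) (Fin n₁) ℝ) + L)⁻¹ *ᵥ
        ((liftV n₁)ᵀ *ᵥ μ)) := by
  have hkey := one_add_smul_mul_eq_mul_one_sub_smul hlift α
  have hfirst : (1 + (α/2) • L) *ᵥ ((liftV n₁)ᵀ *ᵥ πhat) = (1 - α) • ((liftV n₁)ᵀ *ᵥ μ) := by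
    rw [mulVec_mulVec, hkey, ← mulVec_mulVec, hπ, mulVec_smul]
  refine ⟨hfirst, ?_⟩
  have hM : IsUnit (1 + (α/2) • L).det := isUnit_det_of_mul_eq_mul_of_isUnit_det hkey
    (isUnit_det_one_sub_smul_of_mem_colStochastic
      (mem_colStochastic_iff_sum.2 ⟨hPnonneg, hPstoch⟩) hα0.le hα1)
    (liftV_transpose_mul_fromRows_one_zero n₁)
  have hNM : (2/α) • (1 : Matrix (Fin n₁) (Fin n₁) ℝ) + L = (2/α) • (1 + (α/2) • L) := by
    rw [smul_add, smul_smul, show 2 / α * (α / 2) = 1 by field_simp, one_smul]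
  have hN : IsUnit ((2/α) • (1 : Matrix (Fin n₁) (Fin n₁) ℝ) + L).det := by
    rw [hNM, det_smul]
    exact (IsUnit.pow _ (div_ne_zero two_ne_zero hα0.ne').isUnit).mul hM
  let _ := invertibleOfIsUnitDet _ hN
  rw [← mulVec_smul]
  refine (inv_mulVec_eq_vec ?_).symm
  rw [hNM, smul_mulVec, hfirst, smul_smul]
  congr 1
  field_simp
end
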